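/- Let K be a finite simplicial complex over a domain k with face ring R = R_K, and let σ, τ ∈ K. Suppose x^a and x^b are monomials with support(x^a) = σ and support(x^b) = τ (i.e. a_i > 0 iff x_i ∈ σ, b_j > 0 iff x_j ∈ τ). Then the following are equivalent: (1) for every minimal prime p of R, x^a ∈ p or x^b ∉ p; (2) st(σ,K) ⊆ st(τ,K). -/
import Mathlib


open MvPolynomial

/-- The Stanley–Reisner ideal of a finite simplicial complex `L` on vertices `Fin n`. -/
noncomputable def SRIdeal (k : Type*) [CommRing k] (n : ℕ)
    (L : Finset (Finset (Fin n))) : Ideal (MvPolynomial (Fin n) k) :=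
  Ideal.span {f | ∃ S : Finset (Fin n), S ∉ L ∧ f = ∏ i ∈ S, X i}

/-- The face ring `R_K = k[x_1,…,x_n]/I_K`. -/
noncomputable abbrev FaceRing (k : Type*) [CommRing k] (n : ℕ)
    (L : Finset (Finset (Fin n))) : Type _ :=
  MvPolynomial (Fin n) k ⧸ SRIdeal k n L


noncomputable section TravesAux

variable {k : Type*} [CommRing k] [IsDomain k] {n : ℕ}

/-- The endomorphism killing variables outside `α`. -/
noncomputable def phiStar (k : Type*) [CommRing k] {n : ℕ} (α : Finset (Fin n)) :
    MvPolynomial (Fin n) k →ₐ[k] MvPolynomial (Fin n) k :=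
  aeval (fun i => if i ∈ α then X i else 0)

lemma phiStar_X (α : Finset (Fin n)) (i : Fin n) :
    phiStar k α (X i) = if i ∈ α then X i else 0 := aeval_X _ _

lemma sub_phiStar_mem (α : Finset (Fin n)) (f : MvPolynomial (Fin n) k) :
    f - phiStar k α f ∈ Ideal.span {g : MvPolynomial (Fin n) k | ∃ i ∉ α, g = X i} := by
  induction f using MvPolynomial.induction_on with
  | C a => simp [phiStar]
  | add p q hp hq =>
      have : p + q - phiStar k α (p + q) = (p - phiStar k α p) + (q - phiStar k α q) := by
        rw [map_add]; ring
      rw [this]; exact add_mem hp hq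
  | mul_X p i hp =>
      rw [map_mul, phiStar_X]
      by_cases h : i ∈ α
      · rw [if_pos h]
        have : p * X i - phiStar k α p * X i = (p - phiStar k α p) * X i := by ring
        rw [this]; exact Ideal.mul_mem_right _ _ hp
      · rw [if_neg h, mul_zero, sub_zero]
        exact Ideal.mul_mem_left _ _ (Ideal.subset_span ⟨i, h, rfl⟩)

lemma ker_phiStar_eq (α : Finset (Fin n)) :
    RingHom.ker (phiStar k α) =
      Ideal.span {g : MvPolynomial (Fin n) k | ∃ i ∉ α, g = X i} := by
  apply le_antisymm
  · intro f hf
    rw [RingHom.mem_ker] at hf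
    have := sub_phiStar_mem α f
    rwa [hf, sub_zero] at this
  · rw [Ideal.span_le]
    rintro g ⟨i, hi, rfl⟩
    simp [SetLike.mem_coe, RingHom.mem_ker, phiStar_X, hi]

lemma X_mem_ker_phiStar (α : Finset (Fin n)) (i : Fin n) :
    X i ∈ RingHom.ker (phiStar k α) ↔ i ∉ α := by
  rw [RingHom.mem_ker, phiStar_X]
  by_cases h : i ∈ α <;> simp [h, X_ne_zero]

lemma prod_pow_mem_ker_phiStar (α : Finset (Fin n)) (c : Fin n → ℕ) :
    (∏ i, X i ^ c i : MvPolynomial (Fin n) k) ∈ RingHom.ker (phiStar k α) ↔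
      ∃ i, 0 < c i ∧ i ∉ α := by
  rw [RingHom.mem_ker, map_prod]
  simp only [map_pow, phiStar_X]
  rw [Finset.prod_eq_zero_iff]
  constructor
  · rintro ⟨i, -, hi⟩
    by_cases h : i ∈ α
    · rw [if_pos h] at hi
      exact absurd hi (pow_ne_zero _ (X_ne_zero _))
    · rw [if_neg h] at hi
      refine ⟨i, ?_, h⟩
      by_contra hc
      simp [Nat.eq_zero_of_not_pos hc] at hi
  · rintro ⟨i, hci, hi⟩
    exact ⟨i, Finset.mem_univ i, by rw [if_neg hi]; exact zero_pow hci.ne'⟩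

lemma SR_le_ker_phiStar {K : Finset (Finset (Fin n))}
    (hK : ∀ σ ∈ K, ∀ τ : Finset (Fin n), τ ⊆ σ → τ ∈ K)
    {α : Finset (Fin n)} (hα : α ∈ K) :
    SRIdeal k n K ≤ RingHom.ker (phiStar k α) := by
  rw [SRIdeal, Ideal.span_le]
  rintro f ⟨S, hS, rfl⟩
  have hSα : ¬ S ⊆ α := fun h => hS (hK α hα S h)
  obtain ⟨i, hiS, hiα⟩ := Finset.not_subset.mp hSα
  simp only [SetLike.mem_coe, RingHom.mem_ker, map_prod, phiStar_X]
  exact Finset.prod_eq_zero hiS (if_neg hiα)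

lemma ker_phiStar_mono {α β : Finset (Fin n)} (h : α ⊆ β) :
    RingHom.ker (phiStar k β) ≤ RingHom.ker (phiStar k α) := by
  rw [ker_phiStar_eq, ker_phiStar_eq, Ideal.span_le]
  rintro g ⟨i, hi, rfl⟩
  exact Ideal.subset_span ⟨i, fun hc => hi (h hc), rfl⟩

/-- Every minimal prime over the Stanley–Reisner ideal is `ker (phiStar γ)` for a face `γ`. -/
lemma minimalPrime_eq_ker {K : Finset (Finset (Fin n))}
    (hK : ∀ σ ∈ K, ∀ τ : Finset (Fin n), τ ⊆ σ → τ ∈ K)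
    {q : Ideal (MvPolynomial (Fin n) k)} (hq : q ∈ (SRIdeal k n K).minimalPrimes) :
    ∃ γ ∈ K, q = RingHom.ker (phiStar k γ) := by
  classical
  have hqP : q.IsPrime := hq.1.1
  have hIq : SRIdeal k n K ≤ q := hq.1.2
  set γ : Finset (Fin n) := Finset.univ.filter (fun i => X (R := k) i ∉ q) with hγdef
  have hXγ : ∀ i, i ∈ γ ↔ X (R := k) i ∉ q := by
    intro i; simp [hγdef]
  have hγK : γ ∈ K := by
    by_contra hc
    have : (∏ i ∈ γ, X i : MvPolynomial (Fin n) k) ∈ q :=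
      hIq (Ideal.subset_span ⟨γ, hc, rfl⟩)
    obtain ⟨i, hiγ, hXi⟩ := (Ideal.IsPrime.prod_mem_iff).mp this
    exact (hXγ i).mp hiγ hXi
  have hle : RingHom.ker (phiStar k γ) ≤ q := by
    rw [ker_phiStar_eq, Ideal.span_le]
    rintro g ⟨i, hi, rfl⟩
    by_contra hc
    exact hi ((hXγ i).mpr hc)
  have hge : q ≤ RingHom.ker (phiStar k γ) :=
    hq.2 ⟨RingHom.ker_isPrime _, SR_le_ker_phiStar hK hγK⟩ hle
  exact ⟨γ, hγK, le_antisymm hge hle⟩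

end TravesAux

/-- The closed star of a face `σ` in a finite simplicial complex `K`. -/
def closedStar {n : ℕ} (K : Finset (Finset (Fin n))) (σ : Finset (Fin n)) :
    Finset (Finset (Fin n)) := K.filter (fun τ => τ ∪ σ ∈ K)

/-- For monomials `x^a, x^b` with supports the faces `σ, τ` of `K`, the Traves condition
(for every minimal prime `p` of `R_K`, `x^a ∈ p` or `x^b ∉ p`) holds if and only if
`st(σ,K) ⊆ st(τ,K)`. -/
theorem stmt17 (k : Type*) [CommRing k] [IsDomain k] (n : ℕ)
    (K : Finset (Finset (Fin n)))
    (hK : ∀ σ ∈ K, ∀ τ : Finset (Fin n), τ ⊆ σ → τ ∈ K)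
    (σ τ : Finset (Fin n)) (hσ : σ ∈ K) (hτ : τ ∈ K)
    (a b : Fin n → ℕ) (ha : ∀ i, 0 < a i ↔ i ∈ σ) (hb : ∀ i, 0 < b i ↔ i ∈ τ) :
    (∀ P ∈ minimalPrimes (FaceRing k n K),
        Ideal.Quotient.mk (SRIdeal k n K) (∏ i, X i ^ a i) ∈ P ∨
        Ideal.Quotient.mk (SRIdeal k n K) (∏ i, X i ^ b i) ∉ P) ↔
      closedStar K σ ⊆ closedStar K τ := by
  classical
  constructor
  · -- (1) → star inclusion
    intro h1 α hα
    rw [closedStar, Finset.mem_filter] at hα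
    obtain ⟨hαK, hασ⟩ := hα
    rw [closedStar, Finset.mem_filter]
    refine ⟨hαK, ?_⟩
    -- take a minimal prime below ker (phiStar (α ∪ σ))
    have hβK : α ∪ σ ∈ K := hασ
    have hprime : (RingHom.ker (phiStar k (α ∪ σ))).IsPrime := RingHom.ker_isPrime _
    obtain ⟨q, hq, hqle⟩ :=
      Ideal.exists_minimalPrimes_le (J := RingHom.ker (phiStar k (α ∪ σ)))
        (SR_le_ker_phiStar hK hβK)
    obtain ⟨γ, hγK, rfl⟩ := minimalPrime_eq_ker hK hq
    -- α ∪ σ ⊆ γ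
    have hβγ : α ∪ σ ⊆ γ := by
      intro i hi
      by_contra hc
      have : X (R := k) i ∈ RingHom.ker (phiStar k γ) := (X_mem_ker_phiStar γ i).mpr hc
      have := hqle this
      rw [X_mem_ker_phiStar] at this
      exact this hi
    -- get the quotient prime P
    have himg : RingHom.ker (phiStar k γ) ∈
        Ideal.comap (Ideal.Quotient.mk (SRIdeal k n K)) '' minimalPrimes (FaceRing k n K) := by
      rw [← Ideal.minimalPrimes_eq_comap]; exact hq
    obtain ⟨P, hP, hPq⟩ := himg
    have hcond := h1 P hP
    have hmem : ∀ f : MvPolynomial (Fin n) k,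
        Ideal.Quotient.mk (SRIdeal k n K) f ∈ P ↔ f ∈ RingHom.ker (phiStar k γ) := by
      intro f; rw [← hPq]; rfl
    rw [hmem, hmem, prod_pow_mem_ker_phiStar, prod_pow_mem_ker_phiStar] at hcond
    -- x^a ∉ q since σ ⊆ γ
    have hxa : ¬ ∃ i, 0 < a i ∧ i ∉ γ := by
      rintro ⟨i, hai, hiγ⟩
      exact hiγ (hβγ (Finset.mem_union_right _ ((ha i).mp hai)))
    have hxb := hcond.resolve_left hxa
    -- τ ⊆ γ
    have hτγ : τ ⊆ γ := by
      intro i hi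
      by_contra hc
      exact hxb ⟨i, (hb i).mpr hi, hc⟩
    have : α ∪ τ ⊆ γ :=
      Finset.union_subset (fun i hi => hβγ (Finset.mem_union_left _ hi)) hτγ
    exact hK γ hγK _ this
  · -- star inclusion → (1)
    intro hst P hP
    have hq : Ideal.comap (Ideal.Quotient.mk (SRIdeal k n K)) P ∈
        (SRIdeal k n K).minimalPrimes := by
      rw [Ideal.minimalPrimes_eq_comap]; exact ⟨P, hP, rfl⟩
    obtain ⟨γ, hγK, hγeq⟩ := minimalPrime_eq_ker hK hq
    have hmem : ∀ f : MvPolynomial (Fin n) k,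
        Ideal.Quotient.mk (SRIdeal k n K) f ∈ P ↔ f ∈ RingHom.ker (phiStar k γ) := by
      intro f; rw [← hγeq]; rfl
    rw [hmem, hmem, prod_pow_mem_ker_phiStar, prod_pow_mem_ker_phiStar]
    by_cases hσγ : σ ⊆ γ
    · right
      -- γ ∈ closedStar K σ
      have hγst : γ ∈ closedStar K σ := by
        rw [closedStar, Finset.mem_filter]
        exact ⟨hγK, by rwa [Finset.union_eq_left.mpr hσγ]⟩
      have hγτ : γ ∪ τ ∈ K := (Finset.mem_filter.mp (hst hγst)).2
      -- minimality: comap P ≤ ker (phiStar (γ ∪ τ))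
      have hle : RingHom.ker (phiStar k γ) ≤ RingHom.ker (phiStar k (γ ∪ τ)) := by
        rw [← hγeq]
        exact hq.2 ⟨RingHom.ker_isPrime _, SR_le_ker_phiStar hK hγτ⟩
          (le_trans (ker_phiStar_mono Finset.subset_union_left) hγeq.ge)
      rintro ⟨i, hbi, hiγ⟩
      have : X (R := k) i ∈ RingHom.ker (phiStar k (γ ∪ τ)) :=
        hle ((X_mem_ker_phiStar γ i).mpr hiγ)
      rw [X_mem_ker_phiStar] at this
      exact this (Finset.mem_union_right _ ((hb i).mp hbi))
    · left
      obtain ⟨i, hiσ, hiγ⟩ := Finset.not_subset.mp hσγ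
      exact ⟨i, (ha i).mpr hiσ, hiγ⟩
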